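/- Every coatomic logic which enjoys the dual parametrized local IL (with respect to some family) is semisimple. -/

import Mathlib

set_option linter.unusedVariables false

open FirstOrder Set

universe u

/-- Substitution composition for terms of a first-order language. -/
theorem FirstOrder.Language.Term.subst_subst' {L : FirstOrder.Language.{u, u}} {α β γ : Type u}
    (t : L.Term α) (f : α → L.Term β) (g : β → L.Term γ) :
    (t.subst f).subst g = t.subst (fun i => (f i).subst g) := by
  induction t with
  | var => rfl
  | func f ts ih => simp only [Language.Term.subst, ih]

/-- A logic over the absolutely free algebra of `L`-terms in variables `Var`. -/
structure Logic (L : FirstOrder.Language.{u, u}) (Var : Type u) where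
  Deriv : Set (L.Term Var) → L.Term Var → Prop
  deriv_refl : ∀ φ : L.Term Var, Deriv {φ} φ
  deriv_mono : ∀ {Γ Δ : Set (L.Term Var)} {φ : L.Term Var}, Deriv Γ φ → Γ ⊆ Δ → Deriv Δ φ
  deriv_cut : ∀ {Γ Φ : Set (L.Term Var)} {φ : L.Term Var},
      (∀ ψ ∈ Φ, Deriv Γ ψ) → Deriv Φ φ → Deriv Γ φ
  deriv_subst : ∀ {Γ : Set (L.Term Var)} {φ : L.Term Var} (σ : Var → L.Term Var),
      Deriv Γ φ → Deriv ((fun t => t.subst σ) '' Γ) (φ.subst σ)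

namespace Logic

variable {L : FirstOrder.Language.{u, u}} {Var : Type u} (Lg : Logic L Var)

/-- `Γ ⊢ φ` for every `φ ∈ Δ`. -/
def DerivAll (Γ Δ : Set (L.Term Var)) : Prop := ∀ φ ∈ Δ, Lg.Deriv Γ φ

/-- `Γ ⊢ Fm`, i.e. `Γ` derives every formula. -/
def Inc (Γ : Set (L.Term Var)) : Prop := ∀ φ : L.Term Var, Lg.Deriv Γ φ

/-- A theory of the logic: a deductively closed set of formulas. -/
def IsTheory (T : Set (L.Term Var)) : Prop := ∀ φ : L.Term Var, Lg.Deriv T φ → φ ∈ T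

/-- A simple theory: a maximal non-trivial theory. -/
def IsSimple (T : Set (L.Term Var)) : Prop :=
  Lg.IsTheory T ∧ T ≠ univ ∧
    ∀ T' : Set (L.Term Var), Lg.IsTheory T' → T' ≠ univ → T ⊆ T' → T' = T

/-- A semisimple theory: an intersection of simple theories. -/
def IsSemisimple (T : Set (L.Term Var)) : Prop :=
  ∃ S : Set (Set (L.Term Var)), (∀ U ∈ S, Lg.IsSimple U) ∧ T = ⋂₀ S

/-- A semisimple logic: every theory is an intersection of simple theories. -/
def Semisimple : Prop := ∀ T : Set (L.Term Var), Lg.IsTheory T → Lg.IsSemisimple T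

/-- A coatomic logic: every non-trivial theory extends to a simple theory. -/
def Coatomic : Prop :=
  ∀ T : Set (L.Term Var), Lg.IsTheory T → T ≠ univ → ∃ U, Lg.IsSimple U ∧ T ⊆ U

/-- A matrix `⟨A, F⟩` is a model of the logic if the preimage of `F` under any
homomorphism (equivalently, the realization along any valuation) is a theory. -/
def IsModel (A : Type u) [L.Structure A] (F : Set A) : Prop :=
  ∀ v : Var → A, Lg.IsTheory {φ : L.Term Var | φ.realize v ∈ F}

/-- `Γ ⊢ ∅`: `Γ` cannot be jointly designated in any non-trivial model. -/
def Antitheorem (Γ : Set (L.Term Var)) : Prop :=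
  ∀ (A : Type u) [L.Structure A], ∀ F : Set A, Lg.IsModel A F → F ≠ univ →
    ∀ v : Var → A, ¬((fun φ : L.Term Var => φ.realize v) '' Γ ⊆ F)

/-- κ-compactness: every inconsistent set has an inconsistent subset of size `< κ`. -/
def Compact (κ : Cardinal.{u}) : Prop :=
  ∀ Γ : Set (L.Term Var), Lg.Inc Γ → ∃ Γ' ⊆ Γ, Cardinal.mk ↥Γ' < κ ∧ Lg.Inc Γ'

/-- κ-arity: any derivation uses fewer than κ premises. -/
def Ary (κ : Cardinal.{u}) : Prop :=
  ∀ (Γ : Set (L.Term Var)) (φ : L.Term Var), Lg.Deriv Γ φ →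
    ∃ Γ' ⊆ Γ, Cardinal.mk ↥Γ' < κ ∧ Lg.Deriv Γ' φ

end Logic

/-- A parametrized family: for each ordinal `α`, a family of sets of formulas in
`α`-many variable slots together with parameter slots (indexed by `Var`). -/
abbrev PFam (L : FirstOrder.Language.{u, u}) (Var : Type u) : Type (u + 1) :=
  ∀ α : Ordinal.{u}, Set (Set (L.Term (α.ToType ⊕ Var)))

/-- A local (parameter-free) family. -/
abbrev LFam (L : FirstOrder.Language.{u, u}) (Var : Type u) : Type (u + 1) :=
  ∀ α : Ordinal.{u}, Set (Set (L.Term α.ToType))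

/-- A global family: a single set of formulas for each ordinal `α`. -/
abbrev GFam (L : FirstOrder.Language.{u, u}) (Var : Type u) : Type (u + 1) :=
  ∀ α : Ordinal.{u}, Set (L.Term α.ToType)

namespace Logic

variable {L : FirstOrder.Language.{u, u}} {Var : Type u}

/-- `I(φ̄, π̄)`: instantiation of a parametrized set of formulas. -/
def pInst {α : Ordinal.{u}} (I : Set (L.Term (α.ToType ⊕ Var)))
    (phis : α.ToType → L.Term Var) (pis : Var → L.Term Var) : Set (L.Term Var) :=
  (fun t => t.subst (Sum.elim phis pis)) '' I

/-- `I(φ̄)`: instantiation of a parameter-free set of formulas. -/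
def lInst {α : Ordinal.{u}} (I : Set (L.Term α.ToType))
    (phis : α.ToType → L.Term Var) : Set (L.Term Var) :=
  (fun t => t.subst phis) '' I

variable (Lg : Logic L Var)

/-- The κ-ary parametrized local inconsistency lemma w.r.t. the family `Ψ`. -/
def ParamLocalIL (κ : Cardinal.{u}) (Ψ : PFam L Var) : Prop :=
  ∀ α : Ordinal.{u}, 0 < α → α < κ.ord →
    ∀ (Γ : Set (L.Term Var)) (phis : α.ToType → L.Term Var),
      Lg.Inc (Γ ∪ range phis) ↔
        ∃ I ∈ Ψ α, ∃ pis : Var → L.Term Var, Lg.DerivAll Γ (pInst I phis pis)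

/-- The κ-ary local inconsistency lemma w.r.t. the family `Ψ`. -/
def LocalIL (κ : Cardinal.{u}) (Ψ : LFam L Var) : Prop :=
  ∀ α : Ordinal.{u}, 0 < α → α < κ.ord →
    ∀ (Γ : Set (L.Term Var)) (phis : α.ToType → L.Term Var),
      Lg.Inc (Γ ∪ range phis) ↔ ∃ I ∈ Ψ α, Lg.DerivAll Γ (lInst I phis)

/-- The κ-ary global inconsistency lemma w.r.t. the family `Ψ`. -/
def GlobalIL (κ : Cardinal.{u}) (Ψ : GFam L Var) : Prop :=
  Lg.LocalIL κ (fun α => {Ψ α})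

/-- The κ-ary dual parametrized local inconsistency lemma w.r.t. the family `Ψ`. -/
def DualParamLocalIL (κ : Cardinal.{u}) (Ψ : PFam L Var) : Prop :=
  ∀ α : Ordinal.{u}, 0 < α → α < κ.ord →
    ∀ (Γ : Set (L.Term Var)) (phis : α.ToType → L.Term Var),
      (∀ i, Lg.Deriv Γ (phis i)) ↔
        ∀ I ∈ Ψ α, ∀ pis : Var → L.Term Var, Lg.Inc (Γ ∪ pInst I phis pis)

/-- The κ-ary dual local inconsistency lemma w.r.t. the family `Ψ`. -/
def DualLocalIL (κ : Cardinal.{u}) (Ψ : LFam L Var) : Prop :=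
  ∀ α : Ordinal.{u}, 0 < α → α < κ.ord →
    ∀ (Γ : Set (L.Term Var)) (phis : α.ToType → L.Term Var),
      (∀ i, Lg.Deriv Γ (phis i)) ↔ ∀ I ∈ Ψ α, Lg.Inc (Γ ∪ lInst I phis)

/-- The κ-ary dual global inconsistency lemma w.r.t. the family `Ψ`. -/
def DualGlobalIL (κ : Cardinal.{u}) (Ψ : GFam L Var) : Prop :=
  Lg.DualLocalIL κ (fun α => {Ψ α})

/-- The κ-ary classical parametrized local IL: both the ordinary and dual IL. -/
def ClassicalParamLocalIL (κ : Cardinal.{u}) (Ψ : PFam L Var) : Prop :=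
  Lg.ParamLocalIL κ Ψ ∧ Lg.DualParamLocalIL κ Ψ

/-- The κ-ary classical local IL: both the ordinary and dual IL. -/
def ClassicalLocalIL (κ : Cardinal.{u}) (Ψ : LFam L Var) : Prop :=
  Lg.LocalIL κ Ψ ∧ Lg.DualLocalIL κ Ψ

/-- The κ-ary classical global IL: both the ordinary and dual IL. -/
def ClassicalGlobalIL (κ : Cardinal.{u}) (Ψ : GFam L Var) : Prop :=
  Lg.GlobalIL κ Ψ ∧ Lg.DualGlobalIL κ Ψ

/-- The κ-ary parametrized local law of the excluded middle w.r.t. `Ψ`. -/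
def ParamLocalLEM (κ : Cardinal.{u}) (Ψ : PFam L Var) : Prop :=
  (∀ α : Ordinal.{u}, 0 < α → α < κ.ord → ∀ I ∈ Ψ α,
    ∀ (phis : α.ToType → L.Term Var) (pis : Var → L.Term Var),
      Lg.Inc (range phis ∪ pInst I phis pis)) ∧
  (∀ α : Ordinal.{u}, 0 < α → α < κ.ord →
    ∀ (Γ : Set (L.Term Var)) (phis : α.ToType → L.Term Var) (ψ : L.Term Var),
      Lg.Deriv (Γ ∪ range phis) ψ →
      (∀ I ∈ Ψ α, ∀ pis : Var → L.Term Var, Lg.Deriv (Γ ∪ pInst I phis pis) ψ) →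
      Lg.Deriv Γ ψ)

/-- The κ-ary local law of the excluded middle w.r.t. `Ψ`. -/
def LocalLEM (κ : Cardinal.{u}) (Ψ : LFam L Var) : Prop :=
  (∀ α : Ordinal.{u}, 0 < α → α < κ.ord → ∀ I ∈ Ψ α,
    ∀ phis : α.ToType → L.Term Var, Lg.Inc (range phis ∪ lInst I phis)) ∧
  (∀ α : Ordinal.{u}, 0 < α → α < κ.ord →
    ∀ (Γ : Set (L.Term Var)) (phis : α.ToType → L.Term Var) (ψ : L.Term Var),
      Lg.Deriv (Γ ∪ range phis) ψ →
      (∀ I ∈ Ψ α, Lg.Deriv (Γ ∪ lInst I phis) ψ) → Lg.Deriv Γ ψ)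

/-- The κ-ary simple parametrized local IL w.r.t. `Ψ`. -/
def SimpleParamLocalIL (κ : Cardinal.{u}) (Ψ : PFam L Var) : Prop :=
  (∀ α : Ordinal.{u}, 0 < α → α < κ.ord → ∀ I ∈ Ψ α,
    ∀ (phis : α.ToType → L.Term Var) (pis : Var → L.Term Var),
      Lg.Inc (range phis ∪ pInst I phis pis)) ∧
  (∀ α : Ordinal.{u}, 0 < α → α < κ.ord →
    ∀ T : Set (L.Term Var), Lg.IsSimple T → ∀ phis : α.ToType → L.Term Var,
      Lg.Inc (T ∪ range phis) →
        ∃ I ∈ Ψ α, ∃ pis : Var → L.Term Var, Lg.DerivAll T (pInst I phis pis))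

/-- The κ-ary simple local IL w.r.t. `Ψ`. -/
def SimpleLocalIL (κ : Cardinal.{u}) (Ψ : LFam L Var) : Prop :=
  (∀ α : Ordinal.{u}, 0 < α → α < κ.ord → ∀ I ∈ Ψ α,
    ∀ phis : α.ToType → L.Term Var, Lg.Inc (range phis ∪ lInst I phis)) ∧
  (∀ α : Ordinal.{u}, 0 < α → α < κ.ord →
    ∀ T : Set (L.Term Var), Lg.IsSimple T → ∀ phis : α.ToType → L.Term Var,
      Lg.Inc (T ∪ range phis) → ∃ I ∈ Ψ α, Lg.DerivAll T (lInst I phis))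

end Logic

/-- Family for the parametrized local DDT: sets of formulas `I(p̄, q, r̄)`. -/
abbrev PFamD (L : FirstOrder.Language.{u, u}) (Var : Type u) : Type (u + 1) :=
  ∀ α : Ordinal.{u}, Set (Set (L.Term (α.ToType ⊕ (PUnit.{u + 1} ⊕ Var))))

/-- Family for the local DDT: sets of formulas `I(p̄, q)`. -/
abbrev LFamD (L : FirstOrder.Language.{u, u}) (Var : Type u) : Type (u + 1) :=
  ∀ α : Ordinal.{u}, Set (Set (L.Term (α.ToType ⊕ PUnit.{u + 1})))

/-- Family for the global DDT: a single set `I(p̄, q)` for each `α`. -/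
abbrev GFamD (L : FirstOrder.Language.{u, u}) (Var : Type u) : Type (u + 1) :=
  ∀ α : Ordinal.{u}, Set (L.Term (α.ToType ⊕ PUnit.{u + 1}))

namespace Logic

variable {L : FirstOrder.Language.{u, u}} {Var : Type u}

/-- `I(φ̄, ψ)`: instantiation of a DDT set of formulas. -/
def dInst {α : Ordinal.{u}} (I : Set (L.Term (α.ToType ⊕ PUnit.{u + 1})))
    (phis : α.ToType → L.Term Var) (ψ : L.Term Var) : Set (L.Term Var) :=
  (fun t => t.subst (Sum.elim phis (fun _ => ψ))) '' I

/-- `I(φ̄, ψ, π̄)`: instantiation of a parametrized DDT set of formulas. -/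
def pdInst {α : Ordinal.{u}} (I : Set (L.Term (α.ToType ⊕ (PUnit.{u + 1} ⊕ Var))))
    (phis : α.ToType → L.Term Var) (ψ : L.Term Var) (pis : Var → L.Term Var) :
    Set (L.Term Var) :=
  (fun t => t.subst (Sum.elim phis (Sum.elim (fun _ => ψ) pis))) '' I

variable (Lg : Logic L Var)

/-- The κ-ary local deduction--detachment theorem w.r.t. `Φ`. -/
def LocalDDT (κ : Cardinal.{u}) (Φ : LFamD L Var) : Prop :=
  ∀ α : Ordinal.{u}, 0 < α → α < κ.ord →
    ∀ (Γ : Set (L.Term Var)) (phis : α.ToType → L.Term Var) (ψ : L.Term Var),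
      Lg.Deriv (Γ ∪ range phis) ψ ↔ ∃ I ∈ Φ α, Lg.DerivAll Γ (dInst I phis ψ)

/-- The κ-ary global deduction--detachment theorem w.r.t. `Φ`. -/
def GlobalDDT (κ : Cardinal.{u}) (Φ : GFamD L Var) : Prop :=
  Lg.LocalDDT κ (fun α => {Φ α})

/-- The κ-ary parametrized local deduction--detachment theorem w.r.t. `Φ`. -/
def ParamLocalDDT (κ : Cardinal.{u}) (Φ : PFamD L Var) : Prop :=
  ∀ α : Ordinal.{u}, 0 < α → α < κ.ord →
    ∀ (Γ : Set (L.Term Var)) (phis : α.ToType → L.Term Var) (ψ : L.Term Var),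
      Lg.Deriv (Γ ∪ range phis) ψ ↔
        ∃ I ∈ Φ α, ∃ pis : Var → L.Term Var, Lg.DerivAll Γ (pdInst I phis ψ pis)

/-- A protoimplication set: a set `Δ(p, q)` of formulas in two variables with
`∅ ⊢ Δ(p, p)` and `p, Δ(p, q) ⊢ q` (stated via all instances, by structurality). -/
def HasProtoimplication : Prop :=
  ∃ Δ : Set (L.Term (ULift.{u} Bool)),
    (∀ φ : L.Term Var,
      Lg.DerivAll ∅ ((fun t => t.subst (fun _ => φ)) '' Δ)) ∧
    (∀ φ ψ : L.Term Var,
      Lg.Deriv (insert φ ((fun t => t.subst (fun b => if b.down then ψ else φ)) '' Δ)) ψ)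

/-- A rule `Γ ⊢ φ̄` is antiadmissible: substitution instances preserve
inconsistency in every context. -/
def Antiadmissible {ι : Type u} (Γ : Set (L.Term Var)) (phis : ι → L.Term Var) : Prop :=
  ∀ (σ : Var → L.Term Var) (Δ : Set (L.Term Var)),
    Lg.Inc (range (fun i => (phis i).subst σ) ∪ Δ) →
    Lg.Inc ((fun t => t.subst σ) '' Γ ∪ Δ)

/-- The semisimple companion of a logic: the logic determined by the
simple theories of `Lg`. -/
def companion (Lg : Logic L Var) : Logic L Var where
  Deriv Γ φ := ∀ T : Set (L.Term Var), Lg.IsSimple T →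
    ∀ σ : Var → L.Term Var, (fun t => t.subst σ) '' Γ ⊆ T → φ.subst σ ∈ T
  deriv_refl := by
    intro φ T _ σ h
    exact h ⟨φ, rfl, rfl⟩
  deriv_mono := by
    intro Γ Δ φ hΓ hsub T hT σ h
    exact hΓ T hT σ (fun x hx => h ((Set.image_mono hsub) hx))
  deriv_cut := by
    intro Γ Φ φ hΓ hΦ T hT σ h
    refine hΦ T hT σ ?_
    rintro x ⟨ψ, hψ, rfl⟩
    exact hΓ ψ hψ T hT σ h
  deriv_subst := by
    intro Γ φ σ hΓ T hT τ h
    rw [FirstOrder.Language.Term.subst_subst']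
    refine hΓ T hT (fun v => (σ v).subst τ) ?_
    rintro x ⟨ψ, hψ, rfl⟩
    show (ψ.subst fun v => (σ v).subst τ) ∈ T
    rw [← FirstOrder.Language.Term.subst_subst']
    exact h ⟨ψ.subst σ, ⟨ψ, hψ, rfl⟩, rfl⟩

/-- Equivalence of two parametrized IL families, stated through all of their
instances (which, by structurality, is equivalent to the schematic entailments
`I(p̄, q̄) ⊢ I'(p̄, π̄')`). -/
def FamEquiv (Lg : Logic L Var) (κ : Cardinal.{u}) (Ψ Ψ' : PFam L Var) : Prop :=
  (∀ α : Ordinal.{u}, 0 < α → α < κ.ord →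
    ∀ I ∈ Ψ α, ∃ I' ∈ Ψ' α, ∃ pis' : Var → L.Term (α.ToType ⊕ Var),
      ∀ (phis : α.ToType → L.Term Var) (rhos : Var → L.Term Var),
        Lg.DerivAll (pInst I phis rhos)
          (pInst I' phis (fun v => (pis' v).subst (Sum.elim phis rhos)))) ∧
  (∀ α : Ordinal.{u}, 0 < α → α < κ.ord →
    ∀ I' ∈ Ψ' α, ∃ I ∈ Ψ α, ∃ pis : Var → L.Term (α.ToType ⊕ Var),
      ∀ (phis : α.ToType → L.Term Var) (rhos : Var → L.Term Var),
        Lg.DerivAll (pInst I' phis rhos)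
          (pInst I phis (fun v => (pis v).subst (Sum.elim phis rhos))))

end Logic


/-!
If `φ ∉ T`, the dual inconsistency lemma for the single formula `φ` yields an instance
`I(φ, π̄)` consistent with `T`. By coatomicity the theory generated by `T ∪ I(φ, π̄)` lies in a
simple theory `U`; were `φ ∈ U`, the same lemma would make `U ∪ I(φ, π̄) = U` inconsistent.
So `U` is a simple theory over `T` omitting `φ`, and `T` is the intersection of such theories.
-/

namespace Logic

variable {L : FirstOrder.Language.{u, u}} {Var : Type u} (Lg : Logic L Var)

def cn (Γ : Set (L.Term Var)) : Set (L.Term Var) := {ψ | Lg.Deriv Γ ψ}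

variable {Lg}

theorem deriv_of_mem {Γ : Set (L.Term Var)} {φ : L.Term Var} (hφ : φ ∈ Γ) : Lg.Deriv Γ φ :=
  Lg.deriv_mono (Lg.deriv_refl φ) (singleton_subset_iff.2 hφ)

theorem subset_cn (Γ : Set (L.Term Var)) : Γ ⊆ Lg.cn Γ := fun _ => deriv_of_mem

theorem isTheory_cn (Γ : Set (L.Term Var)) : Lg.IsTheory (Lg.cn Γ) :=
  fun _ hψ => Lg.deriv_cut (fun _ hχ => hχ) hψ

theorem cn_eq_univ_iff {Γ : Set (L.Term Var)} : Lg.cn Γ = univ ↔ Lg.Inc Γ :=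
  eq_univ_iff_forall

theorem IsSimple.not_inc {U : Set (L.Term Var)} (hU : Lg.IsSimple U) : ¬ Lg.Inc U := fun hinc =>
  hU.2.1 (eq_univ_of_forall fun ψ => hU.1 ψ (hinc ψ))

theorem Coatomic.exists_isSimple_superset (hco : Lg.Coatomic) {Γ : Set (L.Term Var)}
    (hΓ : ¬ Lg.Inc Γ) : ∃ U, Lg.IsSimple U ∧ Γ ⊆ U := by
  obtain ⟨U, hU, hcnU⟩ := hco (Lg.cn Γ) (isTheory_cn Γ) (mt cn_eq_univ_iff.1 hΓ)
  exact ⟨U, hU, (subset_cn Γ).trans hcnU⟩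

theorem DualParamLocalIL.deriv_iff {κ : Cardinal.{u}} {Ψ : PFam L Var}
    (hΨ : Lg.DualParamLocalIL κ Ψ) (hκ : 1 < κ) (Γ : Set (L.Term Var)) (φ : L.Term Var) :
    Lg.Deriv Γ φ ↔ ∀ I ∈ Ψ 1, ∀ pis : Var → L.Term Var, Lg.Inc (Γ ∪ pInst I (fun _ => φ) pis) := by
  have hone : (1 : Ordinal.{u}) < κ.ord := by rwa [Cardinal.lt_ord, Ordinal.card_one]
  have i₀ : (1 : Ordinal.{u}).ToType := Classical.arbitrary _
  rw [← hΨ 1 zero_lt_one hone Γ (fun _ => φ)]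
  exact ⟨fun h _ => h, fun h => h i₀⟩

theorem exists_isSimple_superset_not_mem (hco : Lg.Coatomic) {κ : Cardinal.{u}}
    {Ψ : PFam L Var} (hΨ : Lg.DualParamLocalIL κ Ψ) (hκ : 1 < κ) {T : Set (L.Term Var)}
    (hT : Lg.IsTheory T) {φ : L.Term Var} (hφ : φ ∉ T) :
    ∃ U, Lg.IsSimple U ∧ T ⊆ U ∧ φ ∉ U := by
  have hnd : ¬ Lg.Deriv T φ := fun hd => hφ (hT φ hd)
  simp only [hΨ.deriv_iff hκ, not_forall] at hnd
  obtain ⟨I, hI, pis, hcons⟩ := hnd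
  obtain ⟨U, hU, hTIU⟩ := hco.exists_isSimple_superset hcons
  refine ⟨U, hU, subset_union_left.trans hTIU, fun hφU => hU.not_inc ?_⟩
  have hinc := (hΨ.deriv_iff hκ U φ).1 (deriv_of_mem hφU) I hI pis
  rwa [union_eq_self_of_subset_right (subset_union_right.trans hTIU)] at hinc

theorem eq_sInter_isSimple_superset {T : Set (L.Term Var)}
    (hsep : ∀ φ ∉ T, ∃ U, Lg.IsSimple U ∧ T ⊆ U ∧ φ ∉ U) :
    T = ⋂₀ {U | Lg.IsSimple U ∧ T ⊆ U} := by
  refine (subset_sInter fun U hU => hU.2).antisymm fun φ hφ => ?_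
  by_contra hφT
  obtain ⟨U, hU, hTU, hφU⟩ := hsep φ hφT
  exact hφU (mem_sInter.1 hφ U ⟨hU, hTU⟩)

end Logic

/-- every coatomic logic with the dual parametrized local IL
(w.r.t. some family) is semisimple. -/
theorem statement_11 {L : FirstOrder.Language.{u, u}} {Var : Type u} (Lg : Logic L Var) (hco : Lg.Coatomic)
    (h : ∃ Ψ : PFam L Var, Lg.DualParamLocalIL 2 Ψ) :
    Lg.Semisimple := by
  obtain ⟨Ψ, hΨ⟩ := h
  intro T hT
  refine ⟨_, fun U hU => hU.1, Logic.eq_sInter_isSimple_superset fun φ hφ => ?_⟩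
  exact Logic.exists_isSimple_superset_not_mem hco hΨ Cardinal.one_lt_two hT hφ
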